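/- Let X be any topological space and let φ : X → X be continuous. If 1 is isolated in the spectrum σ(T_φ) of the composition operator T_φ on C_b(X, ℂ), then the operator T_φ is eventually periodic, i.e., there exist k ∈ ℕ and p ≥ 1 such that T_φ^{k+p} = T_φ^k. -/

import Mathlib

open BoundedContinuousFunction Filter
open scoped ENNReal

/-- The composition (Koopman) operator `f ↦ f ∘ φ` on `C_b(X, ℂ)`. -/
noncomputable def cbKoopman {X : Type*} [TopologicalSpace X] (φ : X → X) (hφ : Continuous φ) :
    (X →ᵇ ℂ) →L[ℂ] (X →ᵇ ℂ) :=
  LinearMap.mkContinuous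
    { toFun := fun f => f.compContinuous ⟨φ, hφ⟩
      map_add' := fun f g => by ext x; simp
      map_smul' := fun c f => by ext x; simp }
    1 (fun f => by simpa using f.norm_compContinuous_le ⟨φ, hφ⟩)

/-!
Pick `ω` on the unit circle close to, but different from, `1`; it lies in the resolvent set of
`T = T_φ`. Since `ω⁻¹ T` has norm at most `1`, telescoping gives
`‖∑_{n<N} ω⁻ⁿ Tⁿ‖ ≤ 2 ‖(ω - T)⁻¹‖` for every `N`. If `x, φ x, …, φ^{N-1} x` were pairwise
separated by bounded continuous functions, a Lagrange interpolant pushed into the unit ball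
would give `h` with `‖h‖ ≤ 1` and `h (φⁿ x) = ωⁿ`, so `(∑_{n<N} ω⁻ⁿ Tⁿ h) x = N`. Hence, for
`N > 2 ‖(ω - T)⁻¹‖`, every orbit contains `i < j < N` with `φⁱ x`, `φʲ x` inseparable;
inseparability is preserved by `φ`, which forces `T^{N + N!} = T^N`.
-/

open Finset Function

theorem Complex.exists_norm_eq_one_ne_one_norm_sub_one_lt {ε : ℝ} (hε : 0 < ε) :
    ∃ ω : ℂ, ‖ω‖ = 1 ∧ ω ≠ 1 ∧ ‖ω - 1‖ < ε := by
  obtain ⟨t, ht, htε, ht1⟩ : ∃ t : ℝ, 0 < t ∧ t < ε ∧ t < 1 :=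
    ⟨min ε 1 / 2, by positivity, by linarith [min_le_left ε 1], by linarith [min_le_right ε 1]⟩
  refine ⟨exp (I * t), norm_exp_I_mul_ofReal t, fun h => ?_, ?_⟩
  · have hsin : 0 < Real.sin (t / 2) :=
      Real.sin_pos_of_pos_of_lt_pi (by positivity) (by linarith [Real.pi_gt_three])
    have := norm_exp_I_mul_ofReal_sub_one t
    rw [h, sub_self, norm_zero, Real.norm_eq_abs, abs_of_pos (by linarith)] at this
    linarith
  · calc ‖exp (I * t) - 1‖ ≤ ‖t‖ := Real.norm_exp_I_mul_ofReal_sub_one_le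
      _ = t := Real.norm_of_nonneg ht.le
      _ < ε := htε

theorem Function.iterate_add_factorial_eq_of_not_injOn {α : Type*} {f : α → α} {a : α} {N : ℕ}
    (h : ¬ Set.InjOn (fun n => f^[n] a) (Set.Iio N)) : f^[N + N.factorial] a = f^[N] a := by
  simp only [Set.InjOn, Set.mem_Iio, not_forall] at h
  obtain ⟨i, hi, j, hj, hij, hne⟩ := h
  wlog hlt : i < j generalizing i j
  · exact this j hj i hi hij.symm (Ne.symm hne) (by omega)
  have hper : IsPeriodicPt f (j - i) (f^[N] a) := by
    have : IsPeriodicPt f (j - i) (f^[i] a) := by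
      rw [IsPeriodicPt, IsFixedPt, ← iterate_add_apply, Nat.sub_add_cancel hlt.le]
      exact hij.symm
    simpa [← iterate_add_apply, Nat.sub_add_cancel hi.le] using this.apply_iterate (N - i)
  rw [add_comm, iterate_add_apply]
  exact (hper.trans_dvd (Nat.dvd_factorial (by omega) (by omega))).eq

theorem ContinuousLinearMap.norm_geom_sum_smul_le_two_mul_norm_resolvent
    {𝕜 E : Type*} [NontriviallyNormedField 𝕜] [NormedAddCommGroup E] [NormedSpace 𝕜 E]
    {T : E →L[𝕜] E} (hT : ‖T‖ ≤ 1) {ω : 𝕜} (hω : ‖ω‖ = 1) (hωT : ω ∈ resolventSet 𝕜 T)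
    (N : ℕ) : ‖∑ n ∈ range N, ω⁻¹ ^ n • T ^ n‖ ≤ 2 * ‖resolvent T ω‖ := by
  have h1 : ‖(1 : E →L[𝕜] E)‖ ≤ 1 := norm_id_le
  have hω0 : ω ≠ 0 := norm_ne_zero_iff.mp (by simp [hω])
  set S := ω⁻¹ • T
  have hSN : ‖S ^ N‖ ≤ 1 := by
    calc ‖S ^ N‖ ≤ ‖S‖ ^ N := by
          rcases N.eq_zero_or_pos with rfl | hN
          · simpa using h1
          · exact norm_pow_le' S hN
      _ ≤ 1 := pow_le_one₀ (norm_nonneg _) (by simpa [S, norm_smul, hω] using hT)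
  -- `S - 1 = -ω⁻¹ • (ω - T)`, so `-ω • resolvent T ω` is a right inverse of `S - 1`.
  have hinv : (S - 1) * (-ω • resolvent T ω) = 1 := by
    have hS : S - 1 = -ω⁻¹ • (algebraMap 𝕜 (E →L[𝕜] E) ω - T) := by
      rw [Algebra.algebraMap_eq_smul_one, smul_sub, smul_smul, neg_mul, inv_mul_cancel₀ hω0]
      simp [S, sub_eq_neg_add, add_comm]
    rw [hS, smul_mul_smul, neg_mul_neg, inv_mul_cancel₀ hω0, one_smul, resolvent,
      Ring.mul_inverse_cancel _ (spectrum.mem_resolventSet_iff.mp hωT)]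
  calc ‖∑ n ∈ range N, ω⁻¹ ^ n • T ^ n‖ = ‖(S ^ N - 1) * (-ω • resolvent T ω)‖ := by
        simp only [← smul_pow]
        rw [← geom_sum_mul, mul_assoc, hinv, mul_one]
    _ ≤ (‖S ^ N‖ + ‖(1 : E →L[𝕜] E)‖) * ‖resolvent T ω‖ := by
        grw [norm_mul_le, norm_sub_le, norm_smul, norm_neg, hω, one_mul]
    _ ≤ 2 * ‖resolvent T ω‖ := by gcongr; linarith

namespace BoundedContinuousFunction

variable {X : Type*} [TopologicalSpace X]

theorem exists_apply_eq_of_injOn {𝕜 : Type*} [NormedField 𝕜] {ι : Type*} (s : Finset ι)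
    (y : ι → X) (hy : Set.InjOn (fun i (f : X →ᵇ 𝕜) => f (y i)) s) (v : ι → 𝕜) :
    ∃ h : X →ᵇ 𝕜, ∀ i ∈ s, h (y i) = v i := by
  classical
  choose! F hF using fun i (hi : i ∈ s) j (hj : j ∈ s) (hij : i ≠ j) =>
    Function.ne_iff.mp (mt (hy hi hj) hij)
  let e (i : ι) : X →ᵇ 𝕜 := ∏ j ∈ s.erase i,
    (F i j (y i) - F i j (y j))⁻¹ • (F i j - const X (F i j (y j)))
  have he : ∀ i ∈ s, ∀ j ∈ s, e i (y j) = if j = i then 1 else 0 := by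
    intro i hi j hj
    split_ifs with hji
    · subst j
      refine (prod_apply _ _ _).trans (prod_eq_one fun k hk => ?_)
      obtain ⟨hki, hk⟩ := mem_erase.mp hk
      simp [inv_mul_cancel₀ (sub_ne_zero.mpr (hF i hi k hk (Ne.symm hki)))]
    · exact (prod_apply _ _ _).trans (prod_eq_zero (mem_erase.mpr ⟨hji, hj⟩) (by simp))
  refine ⟨∑ i ∈ s, v i • e i, fun j hj => ?_⟩
  rw [sum_apply, sum_eq_single_of_mem j hj fun i hi hij => by simp [he i hi j hj, Ne.symm hij]]
  simp [he j hj j hj]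

theorem exists_norm_le_one_eq_of_norm_apply_le_one {β : Type*} [NormedAddCommGroup β]
    [NormedSpace ℝ β] (f : X →ᵇ β) :
    ∃ g : X →ᵇ β, ‖g‖ ≤ 1 ∧ ∀ x, ‖f x‖ ≤ 1 → g x = f x := by
  have hpos (x : X) : 0 < max 1 ‖f x‖ := lt_max_of_lt_left one_pos
  have hcont : Continuous fun x => (max 1 ‖f x‖)⁻¹ • f x :=
    ((continuous_const.max f.continuous.norm).inv₀ fun x => (hpos x).ne').smul f.continuous
  refine ⟨ofNormedAddCommGroup _ hcont 1 fun x => ?_,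
    norm_ofNormedAddCommGroup_le _ zero_le_one _, fun x hx => by simp [max_eq_left hx]⟩
  rw [norm_smul, norm_inv, Real.norm_of_nonneg (hpos x).le, inv_mul_le_iff₀ (hpos x), mul_one]
  exact le_max_right _ _

theorem exists_norm_le_one_apply_eq_of_injOn {𝕜 : Type*} [RCLike 𝕜] {ι : Type*} (s : Finset ι)
    (y : ι → X) (hy : Set.InjOn (fun i (f : X →ᵇ 𝕜) => f (y i)) s) (v : ι → 𝕜)
    (hv : ∀ i ∈ s, ‖v i‖ ≤ 1) : ∃ h : X →ᵇ 𝕜, ‖h‖ ≤ 1 ∧ ∀ i ∈ s, h (y i) = v i := by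
  obtain ⟨f, hf⟩ := exists_apply_eq_of_injOn s y hy v
  obtain ⟨g, hg, hgf⟩ := exists_norm_le_one_eq_of_norm_apply_le_one f
  exact ⟨g, hg, fun i hi => (hgf _ (hf i hi ▸ hv i hi)).trans (hf i hi)⟩

theorem apply_iterate_add_factorial_eq {β : Type*} [PseudoMetricSpace β] {φ : X → X}
    (hφ : Continuous φ) {x : X} {N : ℕ}
    (h : ¬ Set.InjOn (fun n (f : X →ᵇ β) => f (φ^[n] x)) (Set.Iio N)) (f : X →ᵇ β) :
    f (φ^[N + N.factorial] x) = f (φ^[N] x) := by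
  -- Inseparable points need not be equal, so iterate on evaluation functionals instead.
  let Φ (μ : (X →ᵇ β) → β) (g : X →ᵇ β) : β := μ (g.compContinuous ⟨φ, hφ⟩)
  have hsemi : Semiconj (fun y (g : X →ᵇ β) => g y) φ Φ := fun _ => rfl
  have horbit : (fun n (g : X →ᵇ β) => g (φ^[n] x)) = fun n => Φ^[n] fun g => g x :=
    funext fun n => hsemi.iterate_right n x
  have hΦ := iterate_add_factorial_eq_of_not_injOn (horbit ▸ h)
  exact congrFun ((hsemi.iterate_right _ x).trans (hΦ.trans (hsemi.iterate_right _ x).symm)) f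

end BoundedContinuousFunction

section Koopman

variable {X : Type*} [TopologicalSpace X] (φ : X → X) (hφ : Continuous φ)

theorem norm_cbKoopman_le : ‖cbKoopman φ hφ‖ ≤ 1 :=
  LinearMap.mkContinuous_norm_le _ zero_le_one _

theorem cbKoopman_pow_apply (n : ℕ) (f : X →ᵇ ℂ) (x : X) :
    (cbKoopman φ hφ ^ n) f x = f (φ^[n] x) := by
  induction n generalizing x with
  | zero => rfl
  | succ n ih => rw [pow_succ']; exact ih (φ x)

theorem not_injOn_apply_iterate_of_mem_resolventSet {ω : ℂ} (hω : ‖ω‖ = 1)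
    (hωT : ω ∈ resolventSet ℂ (cbKoopman φ hφ)) {N : ℕ}
    (hN : 2 * ‖resolvent (cbKoopman φ hφ) ω‖ < N) (x : X) :
    ¬ Set.InjOn (fun n (f : X →ᵇ ℂ) => f (φ^[n] x)) (Set.Iio N) := by
  intro hinj
  obtain ⟨h, hh, hval⟩ := exists_norm_le_one_apply_eq_of_injOn (range N) (fun n => φ^[n] x)
    (by rwa [coe_range]) (fun n => ω ^ n) (by simp [hω])
  let E : (X →ᵇ ℂ) →L[ℂ] (X →ᵇ ℂ) := ∑ n ∈ range N, ω⁻¹ ^ n • cbKoopman φ hφ ^ n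
  have hEhx : E h x = N := by
    have hω0 : ω ≠ 0 := norm_ne_zero_iff.mp (by simp [hω])
    simp only [E, FunLike.coe_sum, Finset.sum_apply, BoundedContinuousFunction.sum_apply]
    refine (sum_congr rfl fun n hn => ?_).trans (by simp : ∑ _ ∈ range N, (1 : ℂ) = N)
    rw [_root_.smul_apply, BoundedContinuousFunction.smul_apply,
      cbKoopman_pow_apply, hval n hn, smul_eq_mul, ← mul_pow, inv_mul_cancel₀ hω0, one_pow]
  have : (N : ℝ) ≤ 2 * ‖resolvent (cbKoopman φ hφ) ω‖ :=
    calc (N : ℝ) = ‖E h x‖ := by simp [hEhx]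
      _ ≤ ‖E h‖ := norm_coe_le_norm _ _
      _ ≤ ‖E‖ * ‖h‖ := E.le_opNorm h
      _ ≤ ‖E‖ := mul_le_of_le_one_right (norm_nonneg _) hh
      _ ≤ 2 * ‖resolvent (cbKoopman φ hφ) ω‖ :=
        ContinuousLinearMap.norm_geom_sum_smul_le_two_mul_norm_resolvent
          (norm_cbKoopman_le φ hφ) hω hωT N
  linarith

end Koopman

theorem operator_eventually_periodic_of_one_isolated_in_spectrum_general
    {X : Type*} [TopologicalSpace X]
    (φ : X → X) (hφ : Continuous φ)
    (hiso : ∃ ε > 0, ∀ z ∈ spectrum ℂ (cbKoopman φ hφ), z ≠ 1 → ε ≤ ‖z - 1‖) :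
    ∃ k : ℕ, ∃ p ≥ 1, (cbKoopman φ hφ) ^ (k + p) = (cbKoopman φ hφ) ^ k := by
  obtain ⟨ε, hε, hspec⟩ := hiso
  obtain ⟨ω, hω, hω1, hωε⟩ := Complex.exists_norm_eq_one_ne_one_norm_sub_one_lt hε
  have hωT : ω ∈ resolventSet ℂ (cbKoopman φ hφ) :=
    not_not.mp fun hmem => (hspec ω hmem hω1).not_gt hωε
  obtain ⟨N, hN⟩ := exists_nat_gt (2 * ‖resolvent (cbKoopman φ hφ) ω‖)
  refine ⟨N, N.factorial, N.factorial_pos, ?_⟩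
  ext f x
  rw [cbKoopman_pow_apply, cbKoopman_pow_apply]
  exact apply_iterate_add_factorial_eq hφ
    (not_injOn_apply_iterate_of_mem_resolventSet φ hφ hω hωT hN x) f

/-- If `φ : X → X` is continuous and `1` is isolated in the spectrum of the composition
operator `T_φ` on `C_b(X, ℂ)`, then the operator `T_φ` is eventually periodic. -/
theorem operator_eventually_periodic_of_one_isolated_in_spectrum
    {X : Type*} [TopologicalSpace X]
    (φ : X → X) (hφ : Continuous φ)
    (h1 : (1 : ℂ) ∈ spectrum ℂ (cbKoopman φ hφ))
    (hiso : ∃ ε > 0, ∀ z ∈ spectrum ℂ (cbKoopman φ hφ), z ≠ 1 → ε ≤ ‖z - 1‖) :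
    ∃ k : ℕ, ∃ p ≥ 1, (cbKoopman φ hφ) ^ (k + p) = (cbKoopman φ hφ) ^ k :=
  operator_eventually_periodic_of_one_isolated_in_spectrum_general φ hφ hiso
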